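/- Let L be a p/q-changemaker lattice with p > q ≥ 2, suppose σ_i ≥ 1 for all 1 ≤ i ≤ t, and let ι : Λ(G) → L be an isomorphism of lattices from the graph lattice of a finite connected multigraph G without self-loops onto L. If x = ι(Σ_{u∈R} ū) for some subset R of the vertex set of G (where ū denotes the class in Λ(G) of the characteristic vector of the vertex u), then |x·f_1| ≤ 2. -/

import Mathlib

/-- The negative continued fraction `[b_0, …, b_n]⁻ = b_0 - 1/[b_1, …, b_n]⁻`. -/
def cfMinus : List ℚ → ℚ
  | [] => 0
  | [b] => b
  | b :: c :: rest => b - 1 / cfMinus (c :: rest)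

/-- The standard inner product on `ℤ^ι`. -/
def dot {ι : Type*} [Fintype ι] (x y : ι → ℤ) : ℤ := ∑ i, x i * y i

/-- The basis vector `f_i` (indices shifted: `fvec t s i` is `f_{i+1}`). -/
def fvec (t s : ℕ) (i : Fin t) : Fin t ⊕ Fin (s + 1) → ℤ := Pi.single (Sum.inl i) 1

/-- The basis vector `e_j`, `0 ≤ j ≤ s`. -/
def evec (t s : ℕ) (j : Fin (s + 1)) : Fin t ⊕ Fin (s + 1) → ℤ := Pi.single (Sum.inr j) 1

/-- The changemaker vector `w_0 = e_0 + σ_1 f_1 + ⋯ + σ_t f_t`. -/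
def w0 (t s : ℕ) (σ : Fin t → ℤ) : Fin t ⊕ Fin (s + 1) → ℤ :=
  Sum.elim σ fun j => if (j : ℕ) = 0 then 1 else 0

/-- The vector `w_k = -e_{m_{k-1}} + e_{m_{k-1}+1} + ⋯ + e_{m_k}` for `k ≥ 1`. -/
def wk (t s : ℕ) (m : ℕ → ℕ) (k : ℕ) : Fin t ⊕ Fin (s + 1) → ℤ :=
  Sum.elim 0 fun j =>
    if (j : ℕ) = m (k - 1) then -1
    else if m (k - 1) < (j : ℕ) ∧ (j : ℕ) ≤ m k then 1 else 0

/-- The vectors `w_0, w_1, …, w_l`. -/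
def wvec (t s : ℕ) (σ : Fin t → ℤ) (m : ℕ → ℕ) (k : ℕ) : Fin t ⊕ Fin (s + 1) → ℤ :=
  if k = 0 then w0 t s σ else wk t s m k

/-- The `p/q`-changemaker lattice `L = ⟨w_0, …, w_l⟩^⊥ ⊆ ℤ^{t+s+1}`. -/
def Lset (t s l : ℕ) (σ : Fin t → ℤ) (m : ℕ → ℕ) : Set (Fin t ⊕ Fin (s + 1) → ℤ) :=
  {x | ∀ k ≤ l, dot x (wvec t s σ m k) = 0}

/-- The fractional part `L_F = ⟨w_1, …, w_l⟩^⊥ ∩ ⟨e_0, …, e_s⟩`. -/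
def LFset (t s l : ℕ) (m : ℕ → ℕ) : Set (Fin t ⊕ Fin (s + 1) → ℤ) :=
  {x | (∀ i, x (Sum.inl i) = 0) ∧ ∀ k, 1 ≤ k → k ≤ l → dot x (wk t s m k) = 0}

/-- The index set `M = {0, 1, …, s} ∖ {m_0, m_1, …, m_l}`. -/
def Mset (s l : ℕ) (m : ℕ → ℕ) : Finset ℕ :=
  (Finset.range (s + 1)).filter fun j => ∀ k ≤ l, j ≠ m k

/-- The least element of `M` (equal to `s` if `M = ∅`). -/
def minM (s l : ℕ) (m : ℕ → ℕ) : ℕ :=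
  if h : (Mset s l m).Nonempty then (Mset s l m).min' h else s

/-- For `k ∈ M`, the least element `k'` of `M` greater than `k`; equal to `s`
if no such element exists. -/
def nxt (s l : ℕ) (m : ℕ → ℕ) (k : ℕ) : ℕ :=
  if h : ((Mset s l m).filter fun j => k < j).Nonempty then
    ((Mset s l m).filter fun j => k < j).min' h
  else s

/-- `v_0 = e_0 + e_1 + ⋯ + e_{min M}` (equal to `e_0 + ⋯ + e_s` if `M = ∅`). -/
def v0vec (t s l : ℕ) (m : ℕ → ℕ) : Fin t ⊕ Fin (s + 1) → ℤ :=
  Sum.elim 0 fun j => if (j : ℕ) ≤ minM s l m then 1 else 0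

/-- `v'_k = -e_k + e_{k+1} + ⋯ + e_{k'}` for `k ∈ M`. -/
def vKvec (t s l : ℕ) (m : ℕ → ℕ) (k : ℕ) : Fin t ⊕ Fin (s + 1) → ℤ :=
  Sum.elim 0 fun j =>
    if (j : ℕ) = k then -1
    else if k < (j : ℕ) ∧ (j : ℕ) ≤ nxt s l m k then 1 else 0

/-- The sequence `v_0, v_1, …, v_m` (`m = |M|`): `v_0` as above, and
`v_1, …, v_m` are the vectors `v'_k`, `k ∈ M`, in increasing order of `k`. -/
def vSeq (t s l : ℕ) (m : ℕ → ℕ) (i : ℕ) : Fin t ⊕ Fin (s + 1) → ℤ :=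
  if i = 0 then v0vec t s l m
  else vKvec t s l m (((Mset s l m).sort (· ≤ ·)).getD (i - 1) 0)

/-- `x_F = Σ_{j=0}^s (x·e_j) e_j`, the projection to the span of the `e_j`. -/
def Fpart (t s : ℕ) (x : Fin t ⊕ Fin (s + 1) → ℤ) : Fin t ⊕ Fin (s + 1) → ℤ :=
  ∑ j, dot x (evec t s j) • evec t s j

/-- `z` is irreducible in the lattice `S`: there are no nonzero `x, y ∈ S`
with `z = x + y` and `x·y ≥ 0`. -/
def IrredIn {ι : Type*} [Fintype ι] (S : Set (ι → ℤ)) (z : ι → ℤ) : Prop :=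
  ¬ ∃ x y : ι → ℤ, x ∈ S ∧ y ∈ S ∧ x ≠ 0 ∧ y ≠ 0 ∧ z = x + y ∧ 0 ≤ dot x y

/-- The data `(t, s, l, a, m, σ)` presents the `p/q`-changemaker lattice
`⟨w_0, …, w_l⟩^⊥ ⊆ ℤ^{t+s+1}`, where `p/q = n − r/q = [a_0, a_1, …, a_l]⁻` with
`a_0 = n`, `a_k ≥ 2` for `1 ≤ k ≤ l`; `m_0 = 0`, `m_k = a_1 + ⋯ + a_k − k`,
`s = m_l`; and `(σ_1, …, σ_t)` is a nondecreasing tuple of nonnegative integers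
satisfying the changemaker condition with `w_0·w_0 = 1 + Σ σ_i² = n`. -/
structure IsCMLattice (p q n r : ℤ) (t s l : ℕ) (a : ℕ → ℤ) (m : ℕ → ℕ)
    (σ : Fin t → ℤ) : Prop where
  hq2 : 2 ≤ q
  hqp : q < p
  hgcd : Int.gcd p q = 1
  hp : p = n * q - r
  hr0 : 0 < r
  hrq : r < q
  ha0 : a 0 = n
  hak : ∀ k, 1 ≤ k → k ≤ l → 2 ≤ a k
  hcf : cfMinus ((List.range (l + 1)).map fun i => (a i : ℚ)) = (p : ℚ) / (q : ℚ)
  hm0 : m 0 = 0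
  hmrec : ∀ k, 1 ≤ k → k ≤ l → (m k : ℤ) = (m (k - 1) : ℤ) + a k - 1
  hs : s = m l
  hσ0 : ∀ i, 0 ≤ σ i
  hσmono : Monotone σ
  hσcm : ∀ i : Fin t, σ i ≤ (∑ j ∈ Finset.univ.filter (· < i), σ j) + 1
  hσn : 1 + ∑ i, σ i ^ 2 = n

/-- The bilinear form of the multigraph with edge multiplicities `ε`:
`x·y = Σ_v d(v) x_v y_v − Σ_{v≠w} ε(v,w) x_v y_w`, where `d(v) = Σ_w ε(v,w)`. -/
def gform {V : Type*} [Fintype V] [DecidableEq V] (ε : V → V → ℕ) (x y : V → ℤ) : ℤ :=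
  (∑ v, (∑ w, (ε v w : ℤ)) * (x v * y v)) -
    ∑ v, ∑ w ∈ Finset.univ.filter (· ≠ v), (ε v w : ℤ) * (x v * y w)

/-- The simple graph underlying the multigraph with edge multiplicities `ε`. -/
def gGraph {V : Type*} (ε : V → V → ℕ) : SimpleGraph V :=
  SimpleGraph.fromRel (fun v w => 0 < ε v w)

/-- Connectivity of the sub-multigraph induced on the set `S`. -/
def gConnOn {V : Type*} (ε : V → V → ℕ) (S : Set V) : Prop :=
  (SimpleGraph.fromRel (fun v w : S => 0 < ε v.1 w.1)).Connected

/-- `ℤ[V]`, the span of the all-ones vector `[V]` in `ℤ^V`. -/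
def onesSub (V : Type*) : Submodule ℤ (V → ℤ) :=
  Submodule.span ℤ ({fun _ => (1 : ℤ)} : Set (V → ℤ))

/-- The characteristic vector `[R] ∈ ℤ^V` of a finite set of vertices. -/
def chiF {V : Type*} [DecidableEq V] (R : Finset V) : V → ℤ :=
  fun v => if v ∈ R then 1 else 0

/-- Irreducibility, in the graph lattice `Λ(G) = ℤ^V/ℤ[V]`, of the class of
`z : ℤ^V`, stated on representatives: the class of `z` cannot be written as
`x + y` with `x, y` nonzero classes and `x·y ≥ 0`. -/
def gIrredRep {V : Type*} [Fintype V] [DecidableEq V] (ε : V → V → ℕ) (z : V → ℤ) : Prop :=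
  ¬ ∃ x y : V → ℤ, x ∉ onesSub V ∧ y ∉ onesSub V ∧
      z - (x + y) ∈ onesSub V ∧ 0 ≤ gform ε x y

/-!
For a sum of vertices `x`, the identity `2 x·y = Σ_{v,w} ε(v,w) (x_v - x_w) (y_v - y_w)` gives
`|x·z| ≤ z·z` for every `z ∈ L`. Suppose `x·f_1 ≥ 3`. Testing against `f_1 + Σ_{j ∈ A} f_j - f_i`,
where the changemaker condition provides `A ⊆ {j < i}` with `Σ_A σ = σ_i - 1`, shows inductively
that all `x·f_i ≥ 1`, so `x·e_0 = -Σ σ_i (x·f_i) ≤ -1`. Testing against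
`Σ_{i ≤ k} e_{m_i} + e_j - f_1` for `m_k < j < m_{k+1}` makes `x·e_j ≥ 0` there, so that
`x·w_{k+1} = 0` propagates `x·e_{m_k} ≤ -1` to all `k`; then `Σ_{i ≤ l} e_{m_i} - f_1`, of norm
`l + 2`, violates the bound. As the class of `[V]` is zero, the complement of `R` is sent to `-x`,
which gives the lower bound.
-/

open Finset
open scoped Fin.NatCast

section GraphForm

variable {V : Type*} [Fintype V] {ε : V → V → ℕ}

lemma gform_eq_sub [DecidableEq V] (hloop : ∀ v, ε v v = 0) (x y : V → ℤ) :
    gform ε x y = (∑ v, ∑ w, (ε v w : ℤ) * (x v * y v)) -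
      ∑ v, ∑ w, (ε v w : ℤ) * (x v * y w) := by
  unfold gform
  congr 1
  · simp_rw [sum_mul]
  · refine sum_congr rfl fun v _ => ?_
    rw [filter_ne', sum_erase _ (by simp [hloop])]

lemma sum_sum_mul_swap (hsymm : ∀ v w, ε v w = ε w v) (F : V → V → ℤ) :
    ∑ v, ∑ w, (ε v w : ℤ) * F v w = ∑ v, ∑ w, (ε v w : ℤ) * F w v := by
  rw [sum_comm]
  exact sum_congr rfl fun v _ => sum_congr rfl fun w _ => by rw [hsymm]

lemma two_mul_gform [DecidableEq V] (hsymm : ∀ v w, ε v w = ε w v) (hloop : ∀ v, ε v v = 0)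
    (x y : V → ℤ) :
    2 * gform ε x y = ∑ v, ∑ w, (ε v w : ℤ) * ((x v - x w) * (y v - y w)) := by
  set F : V → V → ℤ := fun v w => x v * y v - x v * y w
  have hF : gform ε x y = ∑ v, ∑ w, (ε v w : ℤ) * F v w := by
    simp only [gform_eq_sub hloop, F, mul_sub, sum_sub_distrib]
  calc 2 * gform ε x y
      = ∑ v, ∑ w, (ε v w : ℤ) * F v w + ∑ v, ∑ w, (ε v w : ℤ) * F w v := by
        rw [← sum_sum_mul_swap hsymm F, hF]; ring
    _ = _ := by
        rw [← sum_add_distrib]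
        refine sum_congr rfl fun v _ => ?_
        rw [← sum_add_distrib]
        exact sum_congr rfl fun w _ => by simp only [F]; ring

lemma abs_gform_chiF_le [DecidableEq V] (hsymm : ∀ v w, ε v w = ε w v) (hloop : ∀ v, ε v v = 0)
    (R : Finset V) (y : V → ℤ) : |gform ε (chiF R) y| ≤ gform ε y y := by
  have hterm : ∀ v w, |(ε v w : ℤ) * ((chiF R v - chiF R w) * (y v - y w))| ≤
      (ε v w : ℤ) * ((y v - y w) * (y v - y w)) := by
    intro v w
    have hχ : |chiF R v - chiF R w| ≤ 1 := by unfold chiF; split_ifs <;> simp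
    have hy : |y v - y w| ≤ (y v - y w) * (y v - y w) := by
      rw [← sq, ← Int.natCast_natAbs]; exact Int.natAbs_le_self_sq _
    rw [abs_mul, abs_mul, abs_of_nonneg (Int.natCast_nonneg _)]
    refine mul_le_mul_of_nonneg_left ?_ (Int.natCast_nonneg _)
    calc |chiF R v - chiF R w| * |y v - y w| ≤ 1 * |y v - y w| :=
          mul_le_mul_of_nonneg_right hχ (abs_nonneg _)
      _ ≤ (y v - y w) * (y v - y w) := by rwa [one_mul]
  have h2 : |2 * gform ε (chiF R) y| ≤ 2 * gform ε y y := by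
    rw [two_mul_gform hsymm hloop, two_mul_gform hsymm hloop]
    exact (abs_sum_le_sum_abs _ _).trans <| sum_le_sum fun v _ =>
      (abs_sum_le_sum_abs _ _).trans <| sum_le_sum fun w _ => hterm v w
  rw [abs_mul, abs_two] at h2
  linarith

end GraphForm

lemma dot_eq_dotProduct {ι : Type*} [Fintype ι] (x y : ι → ℤ) : dot x y = x ⬝ᵥ y := rfl

lemma dot_comm {ι : Type*} [Fintype ι] (x y : ι → ℤ) : dot x y = dot y x := by
  simp only [dot_eq_dotProduct, dotProduct_comm]

section Changemaker

variable {ι : Type*} [LinearOrder ι]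

theorem exists_subset_sum_eq_of_le_sum_add_one (σ : ι → ℤ) (S : Finset ι)
    (hS : ∀ i ∈ S, σ i ≤ ∑ j ∈ S with j < i, σ j + 1) {g : ℤ} (hg₀ : 0 ≤ g)
    (hg : g ≤ ∑ j ∈ S, σ j) : ∃ A ⊆ S, ∑ j ∈ A, σ j = g := by
  classical
  induction S using Finset.induction_on_max generalizing g with
  | empty => exact ⟨∅, empty_subset _, by simp at hg ⊢; omega⟩
  | insert a S hlt ih =>
    have ha : a ∉ S := fun h => lt_irrefl a (hlt a h)
    have hS' : ∀ i ∈ S, σ i ≤ ∑ j ∈ S with j < i, σ j + 1 := by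
      intro i hi
      have := hS i (mem_insert_of_mem hi)
      rwa [filter_insert, if_neg (not_lt.2 (hlt i hi).le)] at this
    have hσa : σ a ≤ ∑ j ∈ S, σ j + 1 := by
      have := hS a (mem_insert_self a S)
      rwa [filter_insert, if_neg (lt_irrefl a), filter_true_of_mem hlt] at this
    rw [sum_insert ha] at hg
    by_cases hgS : g ≤ ∑ j ∈ S, σ j
    · obtain ⟨A, hAS, hA⟩ := ih hS' hg₀ hgS
      exact ⟨A, hAS.trans (subset_insert a S), hA⟩
    · obtain ⟨A, hAS, hA⟩ := ih hS' (g := g - σ a) (by omega) (by omega)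
      refine ⟨insert a A, insert_subset_insert a hAS, ?_⟩
      rw [sum_insert fun h => ha (hAS h), hA]
      ring

variable [Fintype ι] {σ : ι → ℤ} {i₀ : ι}

lemma eq_one_of_changemaker (hi₀ : ∀ j, i₀ ≤ j) (hσ1 : ∀ i, 1 ≤ σ i)
    (hσcm : ∀ i, σ i ≤ ∑ j ∈ univ.filter (· < i), σ j + 1) : σ i₀ = 1 := by
  have := hσcm i₀
  rw [filter_false_of_mem fun j _ => not_lt.2 (hi₀ j), sum_empty] at this
  linarith [hσ1 i₀]

theorem one_le_of_forall_abs_dotProduct_le (hi₀ : ∀ j, i₀ ≤ j) (hσ1 : ∀ i, 1 ≤ σ i)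
    (hσcm : ∀ i, σ i ≤ ∑ j ∈ univ.filter (· < i), σ j + 1) {X : ι → ℤ}
    (hX : ∀ c, c ⬝ᵥ σ = 0 → |X ⬝ᵥ c| ≤ c ⬝ᵥ c) (hX₀ : 3 ≤ X i₀) (i : ι) : 1 ≤ X i := by
  classical
  have hσ₀ := eq_one_of_changemaker hi₀ hσ1 hσcm
  induction i using WellFoundedLT.induction with
  | _ i ih =>
  rcases (hi₀ i).eq_or_lt with rfl | hi
  · linarith
  have hcm : ∀ k ∈ univ.filter (· < i),
      σ k ≤ ∑ j ∈ (univ.filter (· < i)).filter (· < k), σ j + 1 := by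
    intro k hk
    rw [filter_filter]
    convert hσcm k using 4
    simp only [mem_filter, mem_univ, true_and] at hk
    exact and_iff_right_of_imp fun hjk => hjk.trans hk
  obtain ⟨A, hAi, hA⟩ := exists_subset_sum_eq_of_le_sum_add_one σ _ hcm
    (sub_nonneg.2 (hσ1 i)) (by linarith [hσcm i])
  have hiA : i ∉ A := fun h => by simpa using hAi h
  set c : ι → ℤ := fun j =>
    (if j = i₀ then 1 else 0) + (if j ∈ A then 1 else 0) - (if j = i then 1 else 0)
  have hcσ : c ⬝ᵥ σ = 0 := by
    simp only [c, dotProduct, sub_mul, add_mul, ite_mul, one_mul, zero_mul,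
      sum_sub_distrib, sum_add_distrib, sum_ite_eq', mem_univ, if_true, sum_ite_mem, univ_inter]
    rw [hA, hσ₀]; ring
  have hle : ∑ j, (c j * X j - c j * c j) ≤ 0 := by
    have := (abs_le.1 (hX c hcσ)).2
    rw [sum_sub_distrib]
    simp only [dotProduct] at this
    simp only [mul_comm (c _) (X _)]
    linarith
  -- `X·c ≤ c·c` is violated unless `X i ≥ 1`: in `Σ (c_j X_j - c_j²)` the `j = i` term is
  -- `-X i - 1`, the `j = i₀` term is at least `2` (as `X i₀ ≥ 3`) and the others are `≥ 0`
  have hterm : ∀ j, (if j = i then -X i - 1 else 0) + (if j = i₀ then 2 else 0) ≤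
      c j * X j - c j * c j := by
    intro j
    by_cases hji : j = i
    · subst hji
      simp [c, hi.ne', hiA]
    by_cases hj₀ : j = i₀
    · subst hj₀
      by_cases hA₀ : j ∈ A <;> simp [c, hji, hA₀] <;> linarith
    by_cases hjA : j ∈ A
    · have := ih j (by simpa using hAi hjA)
      simp [c, hji, hj₀, hjA]
      linarith
    · simp [c, hji, hj₀, hjA]
  have := sum_le_sum fun j (_ : j ∈ univ) => hterm j
  simp only [sum_add_distrib, sum_ite_eq', mem_univ, if_true] at this
  linarith

end Changemaker

theorem le_one_of_chain_bounds {l : ℕ} {m : ℕ → ℕ} {Y : ℕ → ℤ} {c : ℤ}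
    (hm : ∀ k < l, m k < m (k + 1)) (hY₀ : Y (m 0) ≤ -1)
    (hrel : ∀ k < l, Y (m k) = ∑ j ∈ Ioc (m k) (m (k + 1)), Y j)
    (hmid : ∀ k < l, ∀ j ∈ Ioo (m k) (m (k + 1)),
      -((k : ℤ) + 3) ≤ ∑ i ∈ range (k + 1), Y (m i) + Y j - c)
    (hfull : -((l : ℤ) + 2) ≤ ∑ i ∈ range (l + 1), Y (m i) - c) : c ≤ 1 := by
  have hsum : ∀ k, (∀ i ≤ k, Y (m i) ≤ -1) → ∑ i ∈ range (k + 1), Y (m i) ≤ -((k : ℤ) + 1) := by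
    intro k hk
    calc ∑ i ∈ range (k + 1), Y (m i) ≤ ∑ i ∈ range (k + 1), (-1 : ℤ) :=
          sum_le_sum fun i hi => hk i (Nat.lt_succ_iff.1 (mem_range.1 hi))
      _ = -((k : ℤ) + 1) := by simp
  by_contra! hc
  have hneg : ∀ k ≤ l, Y (m k) ≤ -1 := by
    intro k
    induction k using Nat.strong_induction_on with
    | _ k ih =>
    intro hk
    rcases k with _ | k
    · exact hY₀
    have hT := hsum k fun i hi => ih i (by omega) (by omega)
    have hpos : 0 ≤ ∑ j ∈ Ioo (m k) (m (k + 1)), Y j :=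
      sum_nonneg fun j hj => by linarith [hmid k (by omega) j hj]
    have := hrel k (by omega)
    rw [← Ioo_insert_right (hm k (by omega)), sum_insert (by simp)] at this
    linarith [ih k (by omega) (by omega)]
  linarith [hsum l fun i hi => hneg i hi]

section ChangemakerLattice

variable {t s l : ℕ} {σ : Fin t → ℤ} {m : ℕ → ℕ}

lemma dot_eq_sum_inl_add_sum_inr (x y : Fin t ⊕ Fin (s + 1) → ℤ) :
    dot x y = ∑ i, x (.inl i) * y (.inl i) + ∑ j, x (.inr j) * y (.inr j) :=
  Fintype.sum_sum_type _

lemma sum_inr_mul_eq_sum_range (x : Fin t ⊕ Fin (s + 1) → ℤ) (g : ℕ → ℤ) :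
    ∑ j : Fin (s + 1), x (.inr j) * g j =
      ∑ j ∈ range (s + 1), x (.inr (j : Fin (s + 1))) * g j := by
  rw [← Fin.sum_univ_eq_sum_range]
  simp only [Fin.cast_val_eq_self]

/-- The coefficient of `e_j` in `w_k`, for `k ≥ 1`. -/
def wCoeff (m : ℕ → ℕ) (k j : ℕ) : ℤ :=
  if j = m (k - 1) then -1 else if m (k - 1) < j ∧ j ≤ m k then 1 else 0

lemma dot_w0 (x : Fin t ⊕ Fin (s + 1) → ℤ) :
    dot x (w0 t s σ) = ∑ i, x (.inl i) * σ i + x (.inr 0) := by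
  rw [dot_eq_sum_inl_add_sum_inr]
  simp [w0, Fin.val_eq_zero_iff]

lemma dot_wk {k : ℕ} (hk : m (k - 1) < m k) (hks : m k ≤ s) (x : Fin t ⊕ Fin (s + 1) → ℤ) :
    dot x (wk t s m k) =
      ∑ j ∈ Ioc (m (k - 1)) (m k), x (.inr (j : Fin (s + 1))) -
        x (.inr (m (k - 1) : Fin (s + 1))) := by
  rw [dot_eq_sum_inl_add_sum_inr]
  simp only [wk, Sum.elim_inl, Sum.elim_inr, Pi.zero_apply, mul_zero, sum_const_zero, zero_add]
  refine (sum_inr_mul_eq_sum_range x (wCoeff m k)).trans ?_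
  have hsplit : ∀ j : ℕ, x (.inr (j : Fin (s + 1))) * wCoeff m k j =
      (if j ∈ Ioc (m (k - 1)) (m k) then x (.inr (j : Fin (s + 1))) else 0) -
        (if j = m (k - 1) then x (.inr (j : Fin (s + 1))) else 0) := by
    intro j
    unfold wCoeff
    by_cases h1 : j = m (k - 1)
    · simp [h1]
    · by_cases h2 : m (k - 1) < j ∧ j ≤ m k <;> simp [h1, h2]
  rw [sum_congr rfl fun j _ => hsplit j, sum_sub_distrib, sum_ite_mem, sum_ite_eq',
    if_pos (mem_range.2 (by omega)),
    inter_eq_right.2 fun j hj => mem_range.2 (by simp at hj; omega)]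

lemma sumElim_zero_mem_Lset {c : Fin t → ℤ} (hc : c ⬝ᵥ σ = 0) :
    (Sum.elim c 0 : Fin t ⊕ Fin (s + 1) → ℤ) ∈ Lset t s l σ m := by
  intro k _
  rw [dot_eq_sum_inl_add_sum_inr]
  rcases Nat.eq_zero_or_pos k with rfl | hk
  · simpa [wvec, w0, dotProduct] using hc
  · simp [wvec, hk.ne', wk]

lemma dot_sumElim_zero (x : Fin t ⊕ Fin (s + 1) → ℤ) (c : Fin t → ℤ) :
    dot x (Sum.elim c 0) = (x ∘ .inl) ⬝ᵥ c := by
  simp [dot_eq_sum_inl_add_sum_inr, dotProduct]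

variable (s) in
/-- The vector `Σ_{j ∈ B} e_j - f_i`. -/
def eSumSubF (i : Fin t) (B : Finset ℕ) : Fin t ⊕ Fin (s + 1) → ℤ :=
  Sum.elim (-Pi.single i 1) fun j => if (j : ℕ) ∈ B then 1 else 0

variable {i : Fin t} {B : Finset ℕ}

lemma dot_eSumSubF (hB : B ⊆ range (s + 1)) (x : Fin t ⊕ Fin (s + 1) → ℤ) :
    dot x (eSumSubF s i B) = ∑ j ∈ B, x (.inr (j : Fin (s + 1))) - x (.inl i) := by
  rw [dot_eq_sum_inl_add_sum_inr, eSumSubF]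
  simp only [Sum.elim_inl, Sum.elim_inr]
  rw [sum_inr_mul_eq_sum_range x fun j => if j ∈ B then 1 else 0]
  simp [Pi.single_apply, inter_eq_right.2 hB, sub_eq_neg_add]

lemma val_natCast_of_mem (hB : B ⊆ range (s + 1)) {j : ℕ} (hj : j ∈ B) :
    ((j : Fin (s + 1)) : ℕ) = j :=
  Fin.val_cast_of_lt (mem_range.1 (hB hj))

lemma dot_eSumSubF_self (hB : B ⊆ range (s + 1)) :
    dot (eSumSubF s i B) (eSumSubF s i B) = #B + 1 := by
  rw [dot_eSumSubF hB]
  simp only [eSumSubF, Sum.elim_inl, Sum.elim_inr, Pi.neg_apply, Pi.single_eq_same, sub_neg_eq_add]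
  rw [sum_congr rfl (g := fun _ => 1) fun j hj => by simp [val_natCast_of_mem hB hj, hj]]
  simp

lemma eSumSubF_mem_Lset (hσi : σ i = 1) (hB : B ⊆ range (s + 1)) (h0 : 0 ∈ B)
    (hw : ∀ k, 1 ≤ k → k ≤ l → ∑ j ∈ B, wCoeff m k j = 0) :
    eSumSubF s i B ∈ Lset t s l σ m := by
  intro k hk
  rw [dot_comm, dot_eSumSubF hB]
  rcases Nat.eq_zero_or_pos k with rfl | hk1
  · simp only [wvec, if_true, w0, Sum.elim_inl, Sum.elim_inr, hσi]
    rw [sum_congr rfl (g := fun j => if j = 0 then 1 else 0) fun j hj => by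
      simp [val_natCast_of_mem hB hj], sum_ite_eq', if_pos h0]
    ring
  · simp only [wvec, if_neg hk1.ne', wk, Sum.elim_inl, Sum.elim_inr, Pi.zero_apply, sub_zero]
    refine (sum_congr rfl fun j hj => ?_).trans (hw k hk1 hk)
    rw [val_natCast_of_mem hB hj]
    rfl

lemma wCoeff_apply_of_le (hm : StrictMonoOn m (Set.Iic l)) {i r : ℕ} (hi : i ≤ l) (hr₁ : 1 ≤ r)
    (hr : r ≤ l) : wCoeff m r (m i) = (if i = r - 1 then -1 else 0) + if i = r then 1 else 0 := by
  have hr' : r - 1 ∈ Set.Iic l := by simp only [Set.mem_Iic]; omega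
  simp only [wCoeff, hm.injOn.eq_iff (Set.mem_Iic.2 hi) hr', hm.lt_iff_lt hr' (Set.mem_Iic.2 hi),
    hm.le_iff_le (Set.mem_Iic.2 hi) (Set.mem_Iic.2 hr)]
  split_ifs <;> omega

lemma sum_wCoeff_image (hm : StrictMonoOn m (Set.Iic l)) {k r : ℕ} (hk : k ≤ l) (hr₁ : 1 ≤ r)
    (hr : r ≤ l) : ∑ j ∈ (range (k + 1)).image m, wCoeff m r j = if r = k + 1 then -1 else 0 := by
  rw [sum_image (hm.injOn.mono fun i hi => by simp at hi ⊢; omega)]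
  rw [sum_congr rfl fun i hi => wCoeff_apply_of_le hm (by simp at hi; omega) hr₁ hr,
    sum_add_distrib, sum_ite_eq', sum_ite_eq']
  simp only [mem_range]
  split_ifs <;> omega

lemma wCoeff_of_mem_Ioo (hm : StrictMonoOn m (Set.Iic l)) {k j r : ℕ} (hk : k < l)
    (hj : j ∈ Ioo (m k) (m (k + 1))) (hr₁ : 1 ≤ r) (hr : r ≤ l) :
    wCoeff m r j = if r = k + 1 then 1 else 0 := by
  rw [mem_Ioo] at hj
  have hmono : ∀ a b, a ≤ b → b ≤ l → m a ≤ m b := fun a b hab hb =>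
    hm.monotoneOn (Set.mem_Iic.2 (hab.trans hb)) (Set.mem_Iic.2 hb) hab
  have hlt : ∀ a ≤ l, m a < j ↔ a ≤ k := fun a ha =>
    ⟨fun h => by_contra fun hka => (h.trans hj.2).not_ge (hmono _ _ (by omega) ha),
      fun hak => (hmono _ _ hak hk.le).trans_lt hj.1⟩
  have hne : ∀ a ≤ l, j ≠ m a := fun a ha h => by
    have := hlt a ha
    rcases le_or_gt a k with hak | hak
    · exact (this.2 hak).ne' h
    · exact (hmono _ _ hak ha).not_gt (h ▸ hj.2)
  simp only [wCoeff, if_neg (hne _ (by omega : r - 1 ≤ l)), hlt _ (by omega : r - 1 ≤ l),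
    ← not_lt, hlt r hr]
  split_ifs <;> omega

lemma apply_le_of_le (hm : StrictMonoOn m (Set.Iic l)) (hs : s = m l) {k : ℕ} (hk : k ≤ l) :
    m k ≤ s :=
  hs ▸ hm.monotoneOn (Set.mem_Iic.2 hk) (Set.mem_Iic.2 le_rfl) hk

lemma injOn_range (hm : StrictMonoOn m (Set.Iic l)) {k : ℕ} (hk : k ≤ l) :
    Set.InjOn m (range (k + 1)) :=
  hm.injOn.mono fun i hi => by simp only [coe_range, Set.mem_Iio] at hi; simp; omega

lemma image_range_subset (hm : StrictMonoOn m (Set.Iic l)) (hs : s = m l) {k : ℕ} (hk : k ≤ l) :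
    (range (k + 1)).image m ⊆ range (s + 1) := fun j hj => by
  obtain ⟨i, hi, rfl⟩ := mem_image.1 hj
  exact mem_range.2 (Nat.lt_succ_of_le (apply_le_of_le hm hs (by simp at hi; omega)))

variable {x : Fin t ⊕ Fin (s + 1) → ℤ} {i : Fin t}

lemma neg_card_le_of_forall_abs_dot_le (hbd : ∀ z ∈ Lset t s l σ m, |dot x z| ≤ dot z z)
    (hσi : σ i = 1) {B : Finset ℕ} (hB : B ⊆ range (s + 1)) (h0 : 0 ∈ B)
    (hw : ∀ k, 1 ≤ k → k ≤ l → ∑ j ∈ B, wCoeff m k j = 0) :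
    -((#B : ℤ) + 1) ≤ ∑ j ∈ B, x (.inr (j : Fin (s + 1))) - x (.inl i) := by
  have := (abs_le.1 (hbd _ (eSumSubF_mem_Lset hσi hB h0 hw))).1
  rwa [dot_eSumSubF_self hB, dot_eSumSubF hB] at this

lemma neg_le_sum_add_sub_of_mem_Ioo (hbd : ∀ z ∈ Lset t s l σ m, |dot x z| ≤ dot z z)
    (hσi : σ i = 1) (hm : StrictMonoOn m (Set.Iic l)) (hm0 : m 0 = 0) (hs : s = m l) {k : ℕ}
    (hk : k < l) {j : ℕ} (hj : j ∈ Ioo (m k) (m (k + 1))) :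
    -((k : ℤ) + 3) ≤
      ∑ a ∈ range (k + 1), x (.inr (m a : Fin (s + 1))) + x (.inr (j : Fin (s + 1))) -
        x (.inl i) := by
  have hjB : j ∉ (range (k + 1)).image m := fun h => by
    obtain ⟨a, ha, rfl⟩ := mem_image.1 h
    exact (hm.monotoneOn (Set.mem_Iic.2 (by simp at ha; omega)) (Set.mem_Iic.2 hk.le)
      (by simp at ha; omega)).not_gt (mem_Ioo.1 hj).1
  have hjs : j < s + 1 := by
    have := apply_le_of_le hm hs (k := k + 1) hk
    rw [mem_Ioo] at hj
    omega
  have := neg_card_le_of_forall_abs_dot_le hbd hσi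
    (insert_subset (mem_range.2 hjs) (image_range_subset hm hs hk.le))
    (mem_insert_of_mem (mem_image.2 ⟨0, by simp, hm0⟩)) fun r hr₁ hr => by
      rw [sum_insert hjB, wCoeff_of_mem_Ioo hm hk hj hr₁ hr, sum_wCoeff_image hm hk.le hr₁ hr]
      split_ifs <;> simp
  rw [card_insert_of_notMem hjB, card_image_of_injOn (injOn_range hm hk.le), card_range,
    sum_insert hjB, sum_image (injOn_range hm hk.le)] at this
  push_cast at this
  linarith

lemma neg_le_sum_sub (hbd : ∀ z ∈ Lset t s l σ m, |dot x z| ≤ dot z z) (hσi : σ i = 1)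
    (hm : StrictMonoOn m (Set.Iic l)) (hm0 : m 0 = 0) (hs : s = m l) :
    -((l : ℤ) + 2) ≤ ∑ a ∈ range (l + 1), x (.inr (m a : Fin (s + 1))) - x (.inl i) := by
  have := neg_card_le_of_forall_abs_dot_le hbd hσi (image_range_subset hm hs le_rfl)
    (mem_image.2 ⟨0, by simp, hm0⟩) fun r hr₁ hr => by
      rw [sum_wCoeff_image hm le_rfl hr₁ hr, if_neg (by omega)]
  rw [card_image_of_injOn (injOn_range hm le_rfl), card_range,
    sum_image (injOn_range hm le_rfl)] at this
  push_cast at this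
  linarith

theorem apply_inl_le_two_of_forall_abs_dot_le {i₀ : Fin t} (hi₀ : ∀ j, i₀ ≤ j)
    (hσ1 : ∀ i, 1 ≤ σ i) (hσcm : ∀ i : Fin t, σ i ≤ ∑ j ∈ univ.filter (· < i), σ j + 1)
    (hm : StrictMonoOn m (Set.Iic l)) (hm0 : m 0 = 0) (hs : s = m l) (hx : x ∈ Lset t s l σ m)
    (hbd : ∀ z ∈ Lset t s l σ m, |dot x z| ≤ dot z z) : x (.inl i₀) ≤ 2 := by
  by_contra! hx₀
  have hσ₀ := eq_one_of_changemaker hi₀ hσ1 hσcm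
  have hX : ∀ i, 1 ≤ x (.inl i) :=
    one_le_of_forall_abs_dotProduct_le (X := x ∘ .inl) hi₀ hσ1 hσcm (fun c hc => by
      simpa [dot_sumElim_zero] using hbd _ (sumElim_zero_mem_Lset (s := s) (l := l) (m := m) hc))
      hx₀
  have hmlt : ∀ k < l, m k < m (k + 1) := fun k hk =>
    hm (Set.mem_Iic.2 hk.le) (Set.mem_Iic.2 hk) k.lt_succ_self
  have he₀ : x (.inr (m 0 : Fin (s + 1))) ≤ -1 := by
    have h := hx 0 l.zero_le
    rw [wvec, if_pos rfl, dot_w0] at h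
    have := single_le_sum (f := fun i => x (.inl i) * σ i)
      (fun i _ => mul_nonneg (by linarith [hX i]) (by linarith [hσ1 i])) (mem_univ i₀)
    simp only [hσ₀, mul_one] at this
    rw [hm0, Nat.cast_zero]
    linarith
  have hrel : ∀ k < l, x (.inr (m k : Fin (s + 1))) =
      ∑ j ∈ Ioc (m k) (m (k + 1)), x (.inr (j : Fin (s + 1))) := by
    intro k hk
    have h := hx (k + 1) hk
    rw [wvec, if_neg k.succ_ne_zero, dot_wk (by simpa using hmlt k hk) (apply_le_of_le hm hs hk)]
      at h
    simp only [Nat.succ_eq_add_one, Nat.add_sub_cancel] at h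
    linarith
  have := le_one_of_chain_bounds (Y := fun j => x (.inr (j : Fin (s + 1)))) hmlt he₀ hrel
    (fun k hk j hj => neg_le_sum_add_sub_of_mem_Ioo hbd hσ₀ hm hm0 hs hk hj)
    (neg_le_sum_sub hbd hσ₀ hm hm0 hs)
  omega

end ChangemakerLattice

lemma IsCMLattice.strictMonoOn {p q n r : ℤ} {t s l : ℕ} {a : ℕ → ℤ} {m : ℕ → ℕ} {σ : Fin t → ℤ}
    (h : IsCMLattice p q n r t s l a m σ) : StrictMonoOn m (Set.Iic l) :=
  strictMonoOn_Iic_of_lt_succ fun k hk => by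
    have := h.hmrec (k + 1) (by omega) (Order.succ_le_of_lt hk)
    have := h.hak (k + 1) (by omega) (Order.succ_le_of_lt hk)
    simp only [Nat.add_sub_cancel, Order.succ_eq_add_one] at *
    omega

theorem stmt_13_general (p q n r : ℤ) (t s l : ℕ) (a : ℕ → ℤ) (m : ℕ → ℕ) (σ : Fin t → ℤ)
    (h : IsCMLattice p q n r t s l a m σ) (hσ1 : ∀ i, 1 ≤ σ i) (ht : 0 < t)
    {V : Type*} [Fintype V] [DecidableEq V] (ε : V → V → ℕ)
    (hsymm : ∀ v w, ε v w = ε w v) (hloop : ∀ v, ε v v = 0)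
    (φ : (V → ℤ) → (Fin t ⊕ Fin (s + 1) → ℤ))
    (hφadd : ∀ x y, φ (x + y) = φ x + φ y)
    (hφones : φ (fun _ => 1) = 0)
    (hφimg : ∀ x, φ x ∈ Lset t s l σ m)
    (hφsurj : ∀ z ∈ Lset t s l σ m, ∃ x, φ x = z)
    (hφform : ∀ x y, dot (φ x) (φ y) = gform ε x y)
    (R : Finset V) :
    |dot (φ (chiF R)) (fvec t s ⟨0, ht⟩)| ≤ 2 := by
  have hle : ∀ R' : Finset V, φ (chiF R') (.inl ⟨0, ht⟩) ≤ 2 := fun R' =>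
    apply_inl_le_two_of_forall_abs_dot_le (fun _ => Nat.zero_le _) hσ1 h.hσcm h.strictMonoOn
      h.hm0 h.hs (hφimg _) fun z hz => by
        obtain ⟨y, rfl⟩ := hφsurj z hz
        rw [hφform, hφform]
        exact abs_gform_chiF_le hsymm hloop R' y
  have hcompl : φ (chiF Rᶜ) = -φ (chiF R) := by
    have : chiF R + chiF Rᶜ = fun _ => 1 := by
      ext v
      by_cases hv : v ∈ R <;> simp [chiF, hv]
    have hsum := hφadd (chiF R) (chiF Rᶜ)
    rw [this, hφones] at hsum
    exact eq_neg_of_add_eq_zero_right hsum.symm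
  have hcompl_le := hle Rᶜ
  rw [hcompl, Pi.neg_apply] at hcompl_le
  rw [dot_eq_dotProduct, fvec, dotProduct_single, mul_one, abs_le]
  exact ⟨by linarith, hle R⟩

/-- Part of Lemma 6.9 of the paper: if the graph lattice `Λ(G)` of a connected
multigraph `G` is isomorphic (via `φ`, stated on representatives) to a
`p/q`-changemaker lattice `L` with all `σ_i ≥ 1`, then any sum of vertices
`x = ι(Σ_{u∈R} ū)` satisfies `|x·f_1| ≤ 2`. -/
theorem stmt_13 (p q n r : ℤ) (t s l : ℕ) (a : ℕ → ℤ) (m : ℕ → ℕ) (σ : Fin t → ℤ)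
    (h : IsCMLattice p q n r t s l a m σ) (hσ1 : ∀ i, 1 ≤ σ i) (ht : 0 < t)
    {V : Type*} [Fintype V] [DecidableEq V] (ε : V → V → ℕ)
    (hcard : 2 ≤ Fintype.card V)
    (hsymm : ∀ v w, ε v w = ε w v) (hloop : ∀ v, ε v v = 0)
    (hconn : (gGraph ε).Connected)
    (φ : (V → ℤ) → (Fin t ⊕ Fin (s + 1) → ℤ))
    (hφadd : ∀ x y, φ (x + y) = φ x + φ y)
    (hφones : φ (fun _ => 1) = 0)
    (hφker : ∀ x, φ x = 0 → x ∈ onesSub V)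
    (hφimg : ∀ x, φ x ∈ Lset t s l σ m)
    (hφsurj : ∀ z ∈ Lset t s l σ m, ∃ x, φ x = z)
    (hφform : ∀ x y, dot (φ x) (φ y) = gform ε x y)
    (R : Finset V) :
    |dot (φ (chiF R)) (fvec t s ⟨0, ht⟩)| ≤ 2 :=
  stmt_13_general p q n r t s l a m σ h hσ1 ht ε hsymm hloop φ hφadd hφones hφimg hφsurj hφform R
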